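/- Let (π₁, π₂) be a chainable pair of patterns and Aᵢ ∈ D^{πᵢ} for i = 1, 2. (1) If A₁ is left-r(π₁,π₂)-unitary and A₂ is left-r-unitary for some positive integer r, then the product A₁A₂, which belongs to D^{π₁*π₂}, is left-r-unitary. (2) If A₁ is right-r-unitary for some positive integer r and A₂ is right-r(π₁,π₂)-unitary, then the product A₁A₂ ∈ D^{π₁*π₂} is right-r-unitary. -/

import Mathlib

/-- A *pattern* is a tuple `(a, b, c, d)` of (positive) natural numbers. -/
structure Pattern where
  a : ℕ
  b : ℕ
  c : ℕ
  d : ℕ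

namespace Pattern

/-- The entries of a pattern are positive integers. -/
def Pos (π : Pattern) : Prop := 0 < π.a ∧ 0 < π.b ∧ 0 < π.c ∧ 0 < π.d

/-- Number of rows `a*b*d` of a `π`-factor. -/
def rows (π : Pattern) : ℕ := π.a * π.b * π.d

/-- Number of columns `a*c*d` of a `π`-factor. -/
def cols (π : Pattern) : ℕ := π.a * π.c * π.d

/-- `r(π₁, π₂) = a₁c₁/a₂ (= b₂d₂/d₁)`. -/
def rk (π₁ π₂ : Pattern) : ℕ := π₁.a * π₁.c / π₂.a

/-- A pair of patterns is *chainable* if `a₁c₁/a₂ = b₂d₂/d₁` is a positive integer,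
`a₁ ∣ a₂` and `d₂ ∣ d₁`. -/
def Chainable (π₁ π₂ : Pattern) : Prop :=
  π₂.a ∣ π₁.a * π₁.c ∧ π₁.d ∣ π₂.b * π₂.d ∧
    π₁.a * π₁.c / π₂.a = π₂.b * π₂.d / π₁.d ∧
    0 < π₁.a * π₁.c / π₂.a ∧ π₁.a ∣ π₂.a ∧ π₂.d ∣ π₁.d

/-- `π₁ * π₂ := (a₁, b₁d₁/d₂, a₂c₂/a₁, d₂)`. -/
instance : Mul Pattern :=
  ⟨fun π₁ π₂ => ⟨π₁.a, π₁.b * π₁.d / π₂.d, π₂.a * π₂.c / π₁.a, π₂.d⟩⟩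

/-- `‖π‖₀ := a*b*c*d`. -/
def norm0 (π : Pattern) : ℕ := π.a * π.b * π.c * π.d

end Pattern

open scoped Kronecker

/-- The flattening equivalence `(Fin a × Fin b) × Fin d ≃ Fin (a*b*d)`. -/
def kron3Equiv (a b d : ℕ) : (Fin a × Fin b) × Fin d ≃ Fin (a * b * d) :=
  (finProdFinEquiv.prodCongr (Equiv.refl (Fin d))).trans finProdFinEquiv

/-- The support matrix `S_π = I_a ⊗ 1_{b×c} ⊗ I_d ∈ {0,1}^{abd × acd}`. -/
def Pattern.S (π : Pattern) : Matrix (Fin π.rows) (Fin π.cols) ℕ :=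
  Matrix.reindex (kron3Equiv π.a π.b π.d) (kron3Equiv π.a π.c π.d)
    ((1 : Matrix (Fin π.a) (Fin π.a) ℕ) ⊗ₖ
      (Matrix.of fun _ _ => (1 : ℕ) : Matrix (Fin π.b) (Fin π.c) ℕ) ⊗ₖ
      (1 : Matrix (Fin π.d) (Fin π.d) ℕ))

/-- The support matrix `S_π`, extended by zero to an `ℕ × ℕ`-indexed array. -/
def SpatN (π : Pattern) : ℕ → ℕ → ℕ := fun i j =>
  if h : i < π.rows ∧ j < π.cols then π.S ⟨i, h.1⟩ ⟨j, h.2⟩ else 0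

/-- `X` is (the extension by zero of) a `π`-factor: it vanishes outside the support of `S_π`. -/
def IsFactorN (π : Pattern) (X : ℕ → ℕ → ℂ) : Prop :=
  ∀ i j, SpatN π i j = 0 → X i j = 0

/-- Product of matrices encoded as finitely supported `ℕ × ℕ`-indexed arrays. -/
noncomputable def nmul (f g : ℕ → ℕ → ℂ) : ℕ → ℕ → ℂ := fun i j => ∑' k, f i k * g k j

/-- `nprod X k = X 0 * X 1 * ⋯ * X k`. -/
noncomputable def nprod (X : ℕ → ℕ → ℕ → ℂ) : ℕ → ℕ → ℕ → ℂ
  | 0 => X 0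
  | k + 1 => nmul (nprod X k) (X (k + 1))

/-- Frobenius norm. -/
noncomputable def nfrob (f : ℕ → ℕ → ℂ) : ℝ := Real.sqrt (∑' i, ∑' j, ‖f i j‖ ^ 2)

/-- `A` is (the extension by zero of) a matrix of size `m × n`. -/
def SuppIn (m n : ℕ) (A : ℕ → ℕ → ℂ) : Prop := ∀ i j, A i j ≠ 0 → i < m ∧ j < n

/-- A `π`-factor `X` is *left-`r`-unitary* if `r ∣ c` and `‖XY‖_F = ‖Y‖_F` for every
`π'`-factor `Y` with `(π, π')` chainable and `r(π, π') = r`. -/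
def LeftRUnitary (π : Pattern) (r : ℕ) (X : ℕ → ℕ → ℂ) : Prop :=
  r ∣ π.c ∧ ∀ π' : Pattern, π'.Pos → Pattern.Chainable π π' → Pattern.rk π π' = r →
    ∀ Y : ℕ → ℕ → ℂ, IsFactorN π' Y → nfrob (nmul X Y) = nfrob Y

/-- A `π`-factor `X` is *right-`r`-unitary* if `r ∣ b` and `‖YX‖_F = ‖Y‖_F` for every
`π'`-factor `Y` with `(π', π)` chainable and `r(π', π) = r`. -/
def RightRUnitary (π : Pattern) (r : ℕ) (X : ℕ → ℕ → ℂ) : Prop :=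
  r ∣ π.b ∧ ∀ π' : Pattern, π'.Pos → Pattern.Chainable π' π → Pattern.rk π' π = r →
    ∀ Y : ℕ → ℕ → ℂ, IsFactorN π' Y → nfrob (nmul Y X) = nfrob Y

/-! The support of a product of factors is governed by index arithmetic: chainability makes
`a₂ = a₁ t`, `d₁ = d₂ s` and `c₁ d₁ = t b₂ d₂`, so the block indices of rows, middle indices and
columns line up and `A₁A₂` is a `π₁ * π₂`-factor. For left unitarity, if `(π₁ * π₂, π')` is
chainable with ratio `r`, then so is `(π₂, π')` (here `r ∣ c₂` gives `a₂ ∣ a'`), and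
`(π₁, π₂ * π')` is chainable with ratio `r(π₁, π₂)`; hence
`‖(A₁A₂)Y‖ = ‖A₁(A₂Y)‖ = ‖A₂Y‖ = ‖Y‖`. Right unitarity is the mirror image. -/

/-- Row `i` of a `π`-factor is the index `(i / (b d), i / d % b, i % d)` of `I_a ⊗ 1_{b×c} ⊗ I_d`,
and column `j` is `(j / (c d), j / d % c, j % d)`. -/
theorem spatN_ne_zero_iff (π : Pattern) (i j : ℕ) :
    SpatN π i j ≠ 0 ↔ i < π.rows ∧ j < π.cols ∧
      i / (π.b * π.d) = j / (π.c * π.d) ∧ i ≡ j [MOD π.d] := by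
  unfold SpatN
  split
  · rename_i h
    unfold Pattern.rows Pattern.cols at *
    simp only [Pattern.S, kron3Equiv, Matrix.reindex_apply, Matrix.submatrix_apply,
      Equiv.symm_trans_apply, Equiv.prodCongr_symm, Equiv.prodCongr_apply,
      finProdFinEquiv_symm_apply, Prod.map, Equiv.refl_symm, Equiv.refl_apply,
      Matrix.kroneckerMap_apply, Matrix.one_apply, Matrix.of_apply, Fin.divNat, Fin.modNat,
      mul_one, Fin.mk.injEq, mul_ne_zero_iff, ne_eq, ite_eq_right_iff, not_forall,
      Nat.div_div_eq_div_mul, Nat.ModEq, h.1, h.2, true_and]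
    rw [mul_comm π.d, mul_comm π.d]
    exact ⟨fun h' => ⟨h'.1.1, h'.2.1⟩, fun h' => ⟨⟨h'.1, one_ne_zero⟩, h'.2, one_ne_zero⟩⟩
  · simp_all

theorem Nat.dvd_of_mul_eq_mul_of_dvd {a c a' r : ℕ} (hr : 0 < r) (h : a * c = a' * r)
    (hc : r ∣ c) : a ∣ a' := by
  obtain ⟨u, rfl⟩ := hc
  exact ⟨u, Nat.eq_of_mul_eq_mul_right hr (by rw [← h]; ring)⟩

namespace Pattern

variable {π₀ π₁ π₂ π₃ π' : Pattern} {r : ℕ}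

theorem Chainable.a_dvd (h : Chainable π₁ π₂) : π₁.a ∣ π₂.a := h.2.2.2.2.1

theorem Chainable.d_dvd (h : Chainable π₁ π₂) : π₂.d ∣ π₁.d := h.2.2.2.2.2

theorem mul_b_eq (h : π₂.d ∣ π₁.d) : (π₁ * π₂).b = π₁.b * (π₁.d / π₂.d) :=
  Nat.mul_div_assoc _ h

theorem mul_c_eq (h : π₁.a ∣ π₂.a) : (π₁ * π₂).c = π₂.a / π₁.a * π₂.c :=
  (Nat.div_mul_right_comm h _).symm

theorem mul_b_mul_d (h : π₂.d ∣ π₁.d) : (π₁ * π₂).b * (π₁ * π₂).d = π₁.b * π₁.d :=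
  Nat.div_mul_cancel (h.mul_left _)

theorem mul_a_mul_c (h : π₁.a ∣ π₂.a) : (π₁ * π₂).a * (π₁ * π₂).c = π₂.a * π₂.c :=
  Nat.mul_div_cancel' (h.mul_right _)

theorem rows_mul (h : π₂.d ∣ π₁.d) : (π₁ * π₂).rows = π₁.rows := by
  rw [rows, mul_assoc, mul_b_mul_d h, ← mul_assoc]
  rfl

theorem cols_mul (h : π₁.a ∣ π₂.a) : (π₁ * π₂).cols = π₂.cols := by
  rw [cols, mul_a_mul_c h]
  rfl

theorem Pos.mul (h₁ : π₁.Pos) (h₂ : π₂.Pos) (h : Chainable π₁ π₂) : (π₁ * π₂).Pos := by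
  obtain ⟨ha₁, hb₁, -, hd₁⟩ := h₁
  obtain ⟨ha₂, -, hc₂, hd₂⟩ := h₂
  refine ⟨ha₁, ?_, ?_, hd₂⟩
  · rw [mul_b_eq h.d_dvd]
    exact Nat.mul_pos hb₁ (Nat.div_pos (Nat.le_of_dvd hd₁ h.d_dvd) hd₂)
  · rw [mul_c_eq h.a_dvd]
    exact Nat.mul_pos (Nat.div_pos (Nat.le_of_dvd ha₂ h.a_dvd) ha₁) hc₂

theorem chainable_and_rk_eq_iff :
    Chainable π₁ π₂ ∧ rk π₁ π₂ = r ↔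
      0 < π₂.a ∧ 0 < π₁.d ∧ 0 < r ∧ π₁.a * π₁.c = π₂.a * r ∧ π₂.b * π₂.d = π₁.d * r ∧
        π₁.a ∣ π₂.a ∧ π₂.d ∣ π₁.d := by
  constructor
  · rintro ⟨⟨hac, hbd, heq, hr, ha, hd⟩, rfl⟩
    refine ⟨Nat.pos_of_ne_zero fun h0 => ?_, Nat.pos_of_ne_zero fun h0 => ?_, hr,
      (Nat.mul_div_cancel' hac).symm, ?_, ha, hd⟩
    · simp [h0] at hr
    · simp [heq, h0] at hr
    · rw [rk, heq, Nat.mul_div_cancel' hbd]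
  · rintro ⟨ha₂, hd₁, hr, hac, hbd, ha, hd⟩
    have hrk : rk π₁ π₂ = r := by rw [rk, hac, Nat.mul_div_cancel_left _ ha₂]
    have hrk_pos : 0 < rk π₁ π₂ := hrk ▸ hr
    refine ⟨⟨Dvd.intro _ hac.symm, Dvd.intro _ hbd.symm, ?_, hrk_pos, ha, hd⟩, hrk⟩
    rw [hac, hbd, Nat.mul_div_cancel_left _ ha₂, Nat.mul_div_cancel_left _ hd₁]

theorem chainable_of_mul_left (h : Chainable π₁ π₂) (hc : r ∣ π₂.c)
    (h' : Chainable (π₁ * π₂) π' ∧ rk (π₁ * π₂) π' = r) :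
    Chainable π₂ π' ∧ rk π₂ π' = r := by
  obtain ⟨ha', hd₂, hr, hac, hbd, -, hd⟩ := chainable_and_rk_eq_iff.1 h'
  rw [mul_a_mul_c h.a_dvd] at hac
  exact chainable_and_rk_eq_iff.2
    ⟨ha', hd₂, hr, hac, hbd, Nat.dvd_of_mul_eq_mul_of_dvd hr hac hc, hd⟩

theorem chainable_of_mul_right (h : Chainable π₁ π₂) (hb : r ∣ π₁.b)
    (h' : Chainable π' (π₁ * π₂) ∧ rk π' (π₁ * π₂) = r) :
    Chainable π' π₁ ∧ rk π' π₁ = r := by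
  obtain ⟨ha₁, hd', hr, hac, hbd, ha, -⟩ := chainable_and_rk_eq_iff.1 h'
  rw [mul_b_mul_d h.d_dvd] at hbd
  exact chainable_and_rk_eq_iff.2
    ⟨ha₁, hd', hr, hac, hbd, ha, Nat.dvd_of_mul_eq_mul_of_dvd hr ((mul_comm _ _).trans hbd) hb⟩

theorem Chainable.mul_right (h₁₂ : Chainable π₁ π₂) (h₂₃ : Chainable π₂ π₃) :
    Chainable π₁ (π₂ * π₃) ∧ rk π₁ (π₂ * π₃) = rk π₁ π₂ := by
  obtain ⟨ha₂, hd₁, hr, hac, hbd, ha, hd⟩ := chainable_and_rk_eq_iff.1 ⟨h₁₂, rfl⟩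
  rw [← mul_b_mul_d h₂₃.d_dvd] at hbd
  exact chainable_and_rk_eq_iff.2 ⟨ha₂, hd₁, hr, hac, hbd, ha, h₂₃.d_dvd.trans hd⟩

theorem Chainable.mul_left (h₀₁ : Chainable π₀ π₁) (h₁₂ : Chainable π₁ π₂) :
    Chainable (π₀ * π₁) π₂ ∧ rk (π₀ * π₁) π₂ = rk π₁ π₂ := by
  obtain ⟨ha₂, hd₁, hr, hac, hbd, ha, hd⟩ := chainable_and_rk_eq_iff.1 ⟨h₁₂, rfl⟩
  rw [← mul_a_mul_c h₀₁.a_dvd] at hac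
  exact chainable_and_rk_eq_iff.2 ⟨ha₂, hd₁, hr, hac, hbd, h₀₁.a_dvd.trans ha, hd⟩

theorem Chainable.spatN_mul_ne_zero (h : Chainable π₁ π₂) {i k j : ℕ}
    (hik : SpatN π₁ i k ≠ 0) (hkj : SpatN π₂ k j ≠ 0) : SpatN (π₁ * π₂) i j ≠ 0 := by
  rw [spatN_ne_zero_iff] at hik hkj ⊢
  obtain ⟨hi, -, e₁, m₁⟩ := hik
  obtain ⟨-, hj, e₂, m₂⟩ := hkj
  obtain ⟨ha₂, -, -, hac, hbd, ⟨t, ht⟩, hd⟩ := chainable_and_rk_eq_iff.1 ⟨h, rfl⟩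
  have ha₁ : 0 < π₁.a := Nat.pos_of_ne_zero fun h0 => by simp [h0] at ht; omega
  have hc : (π₁ * π₂).c = t * π₂.c := by
    rw [mul_c_eq h.a_dvd, ht, Nat.mul_div_cancel_left _ ha₁]
  -- both sides of `hcd` times `a₁` equal `a₂ b₂ d₂`
  have hcd : π₁.c * π₁.d = π₂.b * π₂.d * t := by
    refine Nat.eq_of_mul_eq_mul_left ha₁ ?_
    rw [← mul_assoc, hac, hbd, ht]
    ring
  refine ⟨by rwa [rows_mul hd], by rwa [cols_mul h.a_dvd], ?_, m₁.of_dvd hd |>.trans m₂⟩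
  calc i / ((π₁ * π₂).b * (π₁ * π₂).d) = k / (π₂.b * π₂.d * t) := by
        rw [mul_b_mul_d hd, e₁, hcd]
    _ = j / ((π₁ * π₂).c * (π₁ * π₂).d) := by
        rw [← Nat.div_div_eq_div_mul, e₂, Nat.div_div_eq_div_mul, hc]
        exact congrArg (j / ·) (by ring : π₂.c * π₂.d * t = t * π₂.c * π₂.d)

end Pattern

open Pattern

theorem IsFactorN.apply_eq_zero_of_cols_le {π : Pattern} {X : ℕ → ℕ → ℂ} (hX : IsFactorN π X)
    (i : ℕ) {k : ℕ} (hk : π.cols ≤ k) : X i k = 0 :=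
  hX i k (by simp [SpatN, hk.not_gt])

theorem IsFactorN.nmul {π₁ π₂ : Pattern} {X Y : ℕ → ℕ → ℂ} (hX : IsFactorN π₁ X)
    (hY : IsFactorN π₂ Y) (h : Chainable π₁ π₂) : IsFactorN (π₁ * π₂) (nmul X Y) := by
  intro i j hij
  refine (tsum_congr fun k => ?_).trans tsum_zero
  by_contra hne
  obtain ⟨hx, hy⟩ := mul_ne_zero_iff.1 hne
  exact h.spatN_mul_ne_zero (mt (hX i k) hx) (mt (hY k j) hy) hij

section nmul

variable {f g h : ℕ → ℕ → ℂ} {K M : ℕ}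

theorem nmul_eq_sum (hf : ∀ i k, K ≤ k → f i k = 0) (i j : ℕ) :
    nmul f g i j = ∑ k ∈ Finset.range K, f i k * g k j :=
  tsum_eq_sum fun k hk => by rw [hf i k (by simpa using hk), zero_mul]

theorem nmul_eq_zero_of_le (hg : ∀ k j, M ≤ j → g k j = 0) (i : ℕ) {j : ℕ} (hj : M ≤ j) :
    nmul f g i j = 0 := by
  simp [nmul, hg _ _ hj]

theorem nmul_assoc (hf : ∀ i k, K ≤ k → f i k = 0) (hg : ∀ k j, M ≤ j → g k j = 0) :
    nmul (nmul f g) h = nmul f (nmul g h) := by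
  funext i j
  rw [nmul_eq_sum fun i _ => nmul_eq_zero_of_le hg i]
  simp only [nmul_eq_sum hf, nmul_eq_sum hg, Finset.sum_mul, Finset.mul_sum, mul_assoc]
  exact Finset.sum_comm

end nmul

section Unitary

variable {π₁ π₂ : Pattern} {r : ℕ} {A₁ A₂ : ℕ → ℕ → ℂ}

theorem LeftRUnitary.nmul (h₂ : π₂.Pos) (hch : Chainable π₁ π₂)
    (hA₁ : IsFactorN π₁ A₁) (hA₂ : IsFactorN π₂ A₂)
    (hL₁ : LeftRUnitary π₁ (rk π₁ π₂) A₁) (hL₂ : LeftRUnitary π₂ r A₂) :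
    LeftRUnitary (π₁ * π₂) r (nmul A₁ A₂) := by
  refine ⟨?_, fun π' hπ' hch' hrk Y hY => ?_⟩
  · rw [mul_c_eq hch.a_dvd]
    exact hL₂.1.mul_left _
  obtain ⟨h₂', hrk₂'⟩ := chainable_of_mul_left hch hL₂.1 ⟨hch', hrk⟩
  obtain ⟨h₁₂', hrk₁₂'⟩ := hch.mul_right h₂'
  rw [nmul_assoc hA₁.apply_eq_zero_of_cols_le hA₂.apply_eq_zero_of_cols_le,
    hL₁.2 _ (h₂.mul hπ' h₂') h₁₂' hrk₁₂' _ (hA₂.nmul hY h₂')]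
  exact hL₂.2 π' hπ' h₂' hrk₂' Y hY

theorem RightRUnitary.nmul (h₁ : π₁.Pos) (hch : Chainable π₁ π₂)
    (hA₁ : IsFactorN π₁ A₁) (hR₁ : RightRUnitary π₁ r A₁)
    (hR₂ : RightRUnitary π₂ (rk π₁ π₂) A₂) :
    RightRUnitary (π₁ * π₂) r (nmul A₁ A₂) := by
  refine ⟨?_, fun π' hπ' hch' hrk Y hY => ?_⟩
  · rw [mul_b_eq hch.d_dvd]
    exact hR₁.1.mul_right _
  obtain ⟨h₁', hrk₁'⟩ := chainable_of_mul_right hch hR₁.1 ⟨hch', hrk⟩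
  obtain ⟨h₁₂', hrk₁₂'⟩ := h₁'.mul_left hch
  rw [← nmul_assoc hY.apply_eq_zero_of_cols_le hA₁.apply_eq_zero_of_cols_le,
    hR₂.2 _ (hπ'.mul h₁ h₁') h₁₂' hrk₁₂' _ (hY.nmul hA₁ h₁')]
  exact hR₁.2 π' hπ' h₁' hrk₁' Y hY

end Unitary

/-- **Lemma (stability of unitarity under multiplication).** For a chainable pair `(π₁, π₂)`
and factors `Aᵢ ∈ D^{πᵢ}`:
(1) if `A₁` is left-`r(π₁,π₂)`-unitary and `A₂` is left-`r`-unitary, then `A₁A₂ ∈ D^{π₁*π₂}`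
is left-`r`-unitary; (2) if `A₁` is right-`r`-unitary and `A₂` is right-`r(π₁,π₂)`-unitary,
then `A₁A₂ ∈ D^{π₁*π₂}` is right-`r`-unitary. -/
theorem unitary_stable_mul (π₁ π₂ : Pattern)
    (h₁ : π₁.Pos) (h₂ : π₂.Pos) (hch : Pattern.Chainable π₁ π₂) :
    (∀ r : ℕ, 0 < r → ∀ A₁ A₂ : ℕ → ℕ → ℂ,
      IsFactorN π₁ A₁ → IsFactorN π₂ A₂ →
      LeftRUnitary π₁ (Pattern.rk π₁ π₂) A₁ → LeftRUnitary π₂ r A₂ →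
      IsFactorN (π₁ * π₂) (nmul A₁ A₂) ∧ LeftRUnitary (π₁ * π₂) r (nmul A₁ A₂)) ∧
    (∀ r : ℕ, 0 < r → ∀ A₁ A₂ : ℕ → ℕ → ℂ,
      IsFactorN π₁ A₁ → IsFactorN π₂ A₂ →
      RightRUnitary π₁ r A₁ → RightRUnitary π₂ (Pattern.rk π₁ π₂) A₂ →
      IsFactorN (π₁ * π₂) (nmul A₁ A₂) ∧ RightRUnitary (π₁ * π₂) r (nmul A₁ A₂)) :=
  ⟨fun _ _ _ _ hA₁ hA₂ hL₁ hL₂ =>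
    ⟨hA₁.nmul hA₂ hch, hL₁.nmul h₂ hch hA₁ hA₂ hL₂⟩,
   fun _ _ _ _ hA₁ hA₂ hR₁ hR₂ =>
    ⟨hA₁.nmul hA₂ hch, hR₁.nmul h₁ hch hA₁ hR₂⟩⟩
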